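/- In the Gaussian mixture model ρ_θ = Σ_{i=1}^{N} p_i N(μ_i, σ²) with p_i = θ_{i-1} - θ_i (θ_0 = 1, θ_N = 0), the Fisher information matrix G_F(θ;σ) with entries ∫ (ρ_{i+1}-ρ_i)(ρ_{j+1}-ρ_j)/ρ_θ dx converges as σ → 0 to the tridiagonal matrix with diagonal entries 1/p_i + 1/p_{i+1}, entry -1/p_i at position (i, i-1), and -1/p_{i+1} at position (i, i+1). -/

import Mathlib

open MeasureTheory Real Filter

/-- The density of the Gaussian with mean `m` and standard deviation `σ`. -/
noncomputable def gaussPDF (m σ x : ℝ) : ℝ :=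
  (1 / (Real.sqrt (2 * Real.pi) * σ)) * Real.exp (-(x - m) ^ 2 / (2 * σ ^ 2))

/-!
Expanding the products, each Fisher entry is a second difference, in both indices, of the
overlaps `I_ab(σ) = ∫ ρ_a ρ_b / ρ_θ`. Substituting `x = μ_a + σ y` turns `I_ab` into
`∫ φ(y) (ρ_b / ρ_θ)(μ_a + σ y) dy` with `φ` the standard normal density. The integrand is bounded
by `φ / p_b`, and it converges pointwise to `δ_ab φ / p_a`: within distance `O(σ)` of `μ_a` every
component with a different mean is exponentially small compared with `ρ_a`. Dominated convergence
gives `I_ab → δ_ab / p_a`, and the second differences of `δ_ab / p_a` form the tridiagonal matrix.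
-/

open Topology

section Gaussian

variable {σ : ℝ}

lemma gaussPDF_pos (hσ : 0 < σ) (m x : ℝ) : 0 < gaussPDF m σ x := by
  have : 0 < Real.sqrt (2 * π) := Real.sqrt_pos.2 (by positivity)
  unfold gaussPDF
  positivity

@[fun_prop]
lemma continuous_gaussPDF (m σ : ℝ) : Continuous (gaussPDF m σ) := by
  unfold gaussPDF
  fun_prop

lemma gaussPDF_eq_gaussianPDFReal (m : ℝ) (hσ : 0 < σ) :
    gaussPDF m σ = ProbabilityTheory.gaussianPDFReal m (σ ^ 2).toNNReal := by
  ext x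
  rw [gaussPDF, ProbabilityTheory.gaussianPDFReal, Real.coe_toNNReal _ (sq_nonneg σ),
    Real.sqrt_mul (by positivity) (σ ^ 2), Real.sqrt_sq hσ.le, one_div]

lemma integrable_gaussPDF (m : ℝ) (hσ : 0 < σ) : Integrable (gaussPDF m σ) := by
  rw [gaussPDF_eq_gaussianPDFReal m hσ]
  exact ProbabilityTheory.integrable_gaussianPDFReal m _

lemma integral_gaussPDF (m : ℝ) (hσ : 0 < σ) : ∫ x, gaussPDF m σ x = 1 := by
  rw [gaussPDF_eq_gaussianPDFReal m hσ]
  exact ProbabilityTheory.integral_gaussianPDFReal_eq_one m (by simpa using hσ.ne')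

lemma mul_gaussPDF_mul_add (hσ : 0 < σ) (m y : ℝ) :
    σ * gaussPDF m σ (σ * y + m) = gaussPDF 0 1 y := by
  have : Real.sqrt (2 * π) ≠ 0 := (Real.sqrt_pos.2 (by positivity)).ne'
  have hexp : -(σ * y + m - m) ^ 2 / (2 * σ ^ 2) = -(y - 0) ^ 2 / (2 * 1 ^ 2) := by
    field_simp
    ring
  rw [gaussPDF, gaussPDF, hexp]
  field_simp

lemma gaussPDF_div_gaussPDF (hσ : 0 < σ) (m m' x : ℝ) :
    gaussPDF m' σ x / gaussPDF m σ x = exp (((x - m) ^ 2 - (x - m') ^ 2) / (2 * σ ^ 2)) := by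
  have : 0 < Real.sqrt (2 * π) := Real.sqrt_pos.2 (by positivity)
  rw [gaussPDF, gaussPDF, mul_div_mul_left _ _ (by positivity), ← Real.exp_sub]
  congr 1
  ring

lemma tendsto_inv_two_mul_sq_nhdsGT_zero :
    Tendsto (fun σ : ℝ => (2 * σ ^ 2)⁻¹) (𝓝[>] 0) atTop := by
  refine tendsto_inv_nhdsGT_zero.comp (tendsto_nhdsWithin_iff.2 ⟨?_, ?_⟩)
  · have hc : Continuous fun σ : ℝ => 2 * σ ^ 2 := by fun_prop
    exact tendsto_nhdsWithin_of_tendsto_nhds (by simpa using hc.tendsto 0)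
  · filter_upwards [self_mem_nhdsWithin] with σ (hσ : 0 < σ)
    exact Set.mem_Ioi.2 (by positivity)

lemma tendsto_gaussPDF_div_gaussPDF_mul_add (m m' y : ℝ) :
    Tendsto (fun σ => gaussPDF m' σ (σ * y + m) / gaussPDF m σ (σ * y + m)) (𝓝[>] 0)
      (𝓝 (if m' = m then 1 else 0)) := by
  split_ifs with h
  · subst h
    refine tendsto_const_nhds.congr' ?_
    filter_upwards [self_mem_nhdsWithin] with σ (hσ : 0 < σ)
    rw [div_self (gaussPDF_pos hσ _ _).ne']
  have hnum : Tendsto (fun σ : ℝ => (σ * y) ^ 2 - (σ * y + (m - m')) ^ 2) (𝓝[>] 0)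
      (𝓝 (-(m - m') ^ 2)) := by
    have hc : Continuous fun σ : ℝ => (σ * y) ^ 2 - (σ * y + (m - m')) ^ 2 := by fun_prop
    exact tendsto_nhdsWithin_of_tendsto_nhds (by simpa using hc.tendsto 0)
  have hneg : -(m - m') ^ 2 < 0 := by
    have := sub_ne_zero.2 (Ne.symm h)
    simp only [neg_lt_zero]
    positivity
  have hexp := tendsto_exp_atBot.comp (hnum.neg_mul_atTop hneg tendsto_inv_two_mul_sq_nhdsGT_zero)
  refine hexp.congr' ?_
  filter_upwards [self_mem_nhdsWithin] with σ (hσ : 0 < σ)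
  rw [Function.comp_apply, gaussPDF_div_gaussPDF hσ, div_eq_mul_inv]
  ring_nf

end Gaussian

lemma integral_comp_mul_add {σ : ℝ} (hσ : 0 < σ) (f : ℝ → ℝ) (m : ℝ) :
    ∫ y, f (σ * y + m) = σ⁻¹ * ∫ x, f x := by
  rw [Measure.integral_comp_mul_left (fun t => f (t + m)) σ, integral_add_right_eq_self,
    abs_of_pos (inv_pos.2 hσ), smul_eq_mul]

lemma integral_gaussPDF_mul {σ : ℝ} (hσ : 0 < σ) (m : ℝ) (g : ℝ → ℝ) :
    ∫ x, gaussPDF m σ x * g x = ∫ y, gaussPDF 0 1 y * g (σ * y + m) := by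
  simp_rw [← mul_gaussPDF_mul_add hσ m, mul_assoc, integral_const_mul,
    integral_comp_mul_add hσ (fun x => gaussPDF m σ x * g x), mul_inv_cancel_left₀ hσ.ne']

noncomputable def mixturePDF {ι : Type*} [Fintype ι] (p μ : ι → ℝ) (σ x : ℝ) : ℝ :=
  ∑ k, p k * gaussPDF (μ k) σ x

noncomputable def mixtureOverlap {ι : Type*} [Fintype ι] (p μ : ι → ℝ) (σ : ℝ) (a b : ι) : ℝ :=
  ∫ x, gaussPDF (μ a) σ x * gaussPDF (μ b) σ x / mixturePDF p μ σ x

section Mixture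

variable {ι : Type*} [Fintype ι] {p μ : ι → ℝ} {σ : ℝ}

@[fun_prop]
lemma continuous_mixturePDF (p μ : ι → ℝ) (σ : ℝ) : Continuous (mixturePDF p μ σ) := by
  unfold mixturePDF
  fun_prop

lemma mul_gaussPDF_le_mixturePDF (hp : ∀ k, 0 ≤ p k) (hσ : 0 < σ) (b : ι) (x : ℝ) :
    p b * gaussPDF (μ b) σ x ≤ mixturePDF p μ σ x :=
  Finset.single_le_sum (fun k _ => mul_nonneg (hp k) (gaussPDF_pos hσ _ _).le)
    (Finset.mem_univ b)

lemma mixturePDF_pos (hp : ∀ k, 0 < p k) (hσ : 0 < σ) (b : ι) (x : ℝ) :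
    0 < mixturePDF p μ σ x :=
  (mul_pos (hp b) (gaussPDF_pos hσ _ x)).trans_le
    (mul_gaussPDF_le_mixturePDF (fun k => (hp k).le) hσ b x)

lemma gaussPDF_div_mixturePDF_le (hp : ∀ k, 0 < p k) (hσ : 0 < σ) (b : ι) (x : ℝ) :
    gaussPDF (μ b) σ x / mixturePDF p μ σ x ≤ 1 / p b := by
  rw [div_le_div_iff₀ (mixturePDF_pos hp hσ b x) (hp b)]
  linarith [mul_gaussPDF_le_mixturePDF (μ := μ) (fun k => (hp k).le) hσ b x]

lemma gaussPDF_div_mixturePDF_nonneg (hp : ∀ k, 0 < p k) (hσ : 0 < σ) (b : ι) (x : ℝ) :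
    0 ≤ gaussPDF (μ b) σ x / mixturePDF p μ σ x :=
  div_nonneg (gaussPDF_pos hσ _ _).le (mixturePDF_pos hp hσ b x).le

lemma integrable_gaussPDF_mul_gaussPDF_div_mixturePDF (hp : ∀ k, 0 < p k) (hσ : 0 < σ)
    (a b : ι) :
    Integrable fun x => gaussPDF (μ a) σ x * gaussPDF (μ b) σ x / mixturePDF p μ σ x := by
  have := fun x => (mixturePDF_pos (μ := μ) hp hσ b x).ne'
  refine ((integrable_gaussPDF (μ a) hσ).mul_const (1 / p b)).mono'
    (Continuous.aestronglyMeasurable (by fun_prop)) (Eventually.of_forall fun x => ?_)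
  rw [mul_div_assoc, norm_mul, Real.norm_of_nonneg (gaussPDF_pos hσ _ _).le,
    Real.norm_of_nonneg (gaussPDF_div_mixturePDF_nonneg hp hσ b x)]
  exact mul_le_mul_of_nonneg_left (gaussPDF_div_mixturePDF_le hp hσ b x) (gaussPDF_pos hσ _ _).le

lemma integral_sub_mul_sub_div_mixturePDF (hp : ∀ k, 0 < p k) (hσ : 0 < σ) (a b c d : ι) :
    ∫ x, (gaussPDF (μ a) σ x - gaussPDF (μ b) σ x) * (gaussPDF (μ c) σ x - gaussPDF (μ d) σ x)
        / mixturePDF p μ σ x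
      = mixtureOverlap p μ σ a c - mixtureOverlap p μ σ a d - mixtureOverlap p μ σ b c
        + mixtureOverlap p μ σ b d := by
  have hI := integrable_gaussPDF_mul_gaussPDF_div_mixturePDF (μ := μ) hp hσ
  calc _ = ∫ x, gaussPDF (μ a) σ x * gaussPDF (μ c) σ x / mixturePDF p μ σ x
          - gaussPDF (μ a) σ x * gaussPDF (μ d) σ x / mixturePDF p μ σ x
          - gaussPDF (μ b) σ x * gaussPDF (μ c) σ x / mixturePDF p μ σ x
          + gaussPDF (μ b) σ x * gaussPDF (μ d) σ x / mixturePDF p μ σ x := by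
        congr 1
        ext x
        ring
    _ = _ := by
      rw [integral_add ?_ (hI b d), integral_sub ?_ (hI b c), integral_sub (hI a c) (hI a d)]
      · rfl
      · exact (hI a c).sub (hI a d)
      · exact ((hI a c).sub (hI a d)).sub (hI b c)

lemma tendsto_gaussPDF_div_mixturePDF_mul_add [DecidableEq ι] (hμ : Function.Injective μ)
    (hp : ∀ k, 0 < p k) (a b : ι) (y : ℝ) :
    Tendsto (fun σ => gaussPDF (μ b) σ (σ * y + μ a) / mixturePDF p μ σ (σ * y + μ a)) (𝓝[>] 0)
      (𝓝 (if a = b then 1 / p a else 0)) := by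
  set r : ι → ℝ → ℝ := fun k σ => gaussPDF (μ k) σ (σ * y + μ a) / gaussPDF (μ a) σ (σ * y + μ a)
  have hr (k : ι) : Tendsto (r k) (𝓝[>] 0) (𝓝 (if k = a then 1 else 0)) := by
    simpa only [hμ.eq_iff] using tendsto_gaussPDF_div_gaussPDF_mul_add (μ a) (μ k) y
  have hsum : Tendsto (fun σ => ∑ k, p k * r k σ) (𝓝[>] 0) (𝓝 (p a)) := by
    simpa [mul_ite] using tendsto_finsetSum Finset.univ fun k _ => (hr k).const_mul (p k)
  have hlim : (if b = a then 1 else 0) / p a = if a = b then 1 / p a else 0 := by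
    rcases eq_or_ne a b with rfl | hab
    · simp
    · simp [hab, hab.symm]
  rw [← hlim]
  refine ((hr b).div hsum (hp a).ne').congr' ?_
  filter_upwards [self_mem_nhdsWithin] with σ (hσ : 0 < σ)
  simp only [r, ← mul_div_assoc, ← Finset.sum_div]
  exact div_div_div_cancel_right₀ (gaussPDF_pos hσ _ _).ne' _ _

theorem tendsto_mixtureOverlap [DecidableEq ι] (hμ : Function.Injective μ) (hp : ∀ k, 0 < p k)
    (a b : ι) :
    Tendsto (fun σ => mixtureOverlap p μ σ a b) (𝓝[>] 0)
      (𝓝 (if a = b then 1 / p a else 0)) := by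
  have hlim : ∫ y, gaussPDF 0 1 y * (if a = b then 1 / p a else 0)
      = if a = b then 1 / p a else 0 := by
    rw [integral_mul_const, integral_gaussPDF 0 one_pos, one_mul]
  rw [← hlim]
  refine (tendsto_integral_filter_of_dominated_convergence
    (F := fun σ y => gaussPDF 0 1 y * (gaussPDF (μ b) σ (σ * y + μ a)
      / mixturePDF p μ σ (σ * y + μ a))) (fun y => gaussPDF 0 1 y * (1 / p b))
    ?_ ?_ ((integrable_gaussPDF 0 one_pos).mul_const _) ?_).congr' ?_
  · filter_upwards [self_mem_nhdsWithin] with σ (hσ : 0 < σ)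
    have := fun y => (mixturePDF_pos (μ := μ) hp hσ b (σ * y + μ a)).ne'
    exact Continuous.aestronglyMeasurable (by fun_prop)
  · filter_upwards [self_mem_nhdsWithin] with σ (hσ : 0 < σ)
    refine Eventually.of_forall fun y => ?_
    rw [norm_mul, Real.norm_of_nonneg (gaussPDF_pos one_pos _ _).le,
      Real.norm_of_nonneg (gaussPDF_div_mixturePDF_nonneg hp hσ b _)]
    exact mul_le_mul_of_nonneg_left (gaussPDF_div_mixturePDF_le hp hσ b _)
      (gaussPDF_pos one_pos _ _).le
  · exact Eventually.of_forall fun y =>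
      (tendsto_gaussPDF_div_mixturePDF_mul_add hμ hp a b y).const_mul _
  · filter_upwards [self_mem_nhdsWithin] with σ (hσ : 0 < σ)
    simp only [mixtureOverlap, mul_div_assoc]
    exact (integral_gaussPDF_mul hσ (μ a) fun x => gaussPDF (μ b) σ x / mixturePDF p μ σ x).symm

end Mixture

lemma succ_castSucc_second_difference {n : ℕ} (p : Fin (n + 1) → ℝ) (i j : Fin n) :
    ((if i.succ = j.succ then 1 / p i.succ else 0)
      - (if i.succ = j.castSucc then 1 / p i.succ else 0)
      - (if i.castSucc = j.succ then 1 / p i.castSucc else 0)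
      + if i.castSucc = j.castSucc then 1 / p i.castSucc else 0)
      = if i = j then 1 / p i.castSucc + 1 / p i.succ
        else if (i : ℕ) = (j : ℕ) + 1 then -(1 / p i.castSucc)
        else if (j : ℕ) = (i : ℕ) + 1 then -(1 / p i.succ)
        else 0 := by
  rcases eq_or_ne i j with rfl | hij
  · simp [Fin.ext_iff]
    ring
  · simp only [Fin.ext_iff, Fin.val_succ, Fin.val_castSucc, hij, if_false]
    split_ifs <;> first | omega | simp

theorem fisher_matrix_scaling_limit_general (n : ℕ) (μ : Fin (n + 1) → ℝ) (hμ : StrictMono μ)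
    (p : Fin (n + 1) → ℝ) (hp : ∀ i, 0 < p i) (i j : Fin n) :
    Tendsto
      (fun σ : ℝ => ∫ x : ℝ,
        (gaussPDF (μ i.succ) σ x - gaussPDF (μ i.castSucc) σ x) *
          (gaussPDF (μ j.succ) σ x - gaussPDF (μ j.castSucc) σ x) /
          (∑ k, p k * gaussPDF (μ k) σ x))
      (nhdsWithin 0 (Set.Ioi 0))
      (nhds
        (if i = j then 1 / p i.castSucc + 1 / p i.succ
         else if (i : ℕ) = (j : ℕ) + 1 then -(1 / p i.castSucc)
         else if (j : ℕ) = (i : ℕ) + 1 then -(1 / p i.succ)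
         else 0)) := by
  have hI := tendsto_mixtureOverlap hμ.injective hp
  have hlim := (((hI i.succ j.succ).sub (hI i.succ j.castSucc)).sub
    (hI i.castSucc j.succ)).add (hI i.castSucc j.castSucc)
  rw [succ_castSucc_second_difference] at hlim
  refine hlim.congr' ?_
  filter_upwards [self_mem_nhdsWithin] with σ (hσ : 0 < σ)
  exact (integral_sub_mul_sub_div_mixturePDF hp hσ _ _ _ _).symm

/-- Scaling limit of the Fisher information matrix of a Gaussian mixture model:
components `ρ_k = N(μ_k, σ²)`, `k = 1, …, N` with `N = n + 1`, rows/columns indexed by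
`i j : Fin n` (paper indices `i+1, j+1 ∈ {1, …, N-1}`).  The entries
`∫ (ρ_{i+1} - ρ_i)(ρ_{j+1} - ρ_j)/ρ_θ` converge as `σ → 0⁺` to the tridiagonal matrix with
diagonal `1/p_i + 1/p_{i+1}`, entry `-1/p_i` at `(i, i-1)` and `-1/p_{i+1}` at `(i, i+1)`. -/
theorem fisher_matrix_scaling_limit (n : ℕ) (μ : Fin (n + 1) → ℝ) (hμ : StrictMono μ)
    (p : Fin (n + 1) → ℝ) (hp : ∀ i, 0 < p i) (hsum : ∑ i, p i = 1) (i j : Fin n) :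
    Tendsto
      (fun σ : ℝ => ∫ x : ℝ,
        (gaussPDF (μ i.succ) σ x - gaussPDF (μ i.castSucc) σ x) *
          (gaussPDF (μ j.succ) σ x - gaussPDF (μ j.castSucc) σ x) /
          (∑ k, p k * gaussPDF (μ k) σ x))
      (nhdsWithin 0 (Set.Ioi 0))
      (nhds
        (if i = j then 1 / p i.castSucc + 1 / p i.succ
         else if (i : ℕ) = (j : ℕ) + 1 then -(1 / p i.castSucc)
         else if (j : ℕ) = (i : ℕ) + 1 then -(1 / p i.succ)
         else 0)) :=
  fisher_matrix_scaling_limit_general n μ hμ p hp i j
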